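/- arXiv:1311.4042 — 4 statements merged into one kernel-verified Lean document; each statement's English description precedes it below -/
import Mathlib

section
/- Let p be a real number and define G1(a,b) = sqrt(a(a+b+1)(p-a)/(a+b)) when b is even, G1(a,b) = -sqrt(a(p-a)) when b is odd, G2(a,b) = sqrt(a+b+1) when b is even, and G2(a,b) = -sqrt((b+1)(p+b+1)/(a+b)) when b is odd. Then for all positive integers a and b with a ≤ p the recurrence G1(a,b)·G2(a+1,b-1)/sqrt(a+b+1) + G1(a,b-1)·G2(a,b-1)·sqrt(a+b-1)/(a+b) = 0 holds. -/
/-! Write `b = n + 1` and split on the parity of `n`. In each case every radicand is, up to a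
positive rational factor in `a + n`, one of `a (p - a)` or `(n + 1) (p + n + 1)`. Since
`√(x y) = √x √y` and `√(x / y) = √x / √y` need only `0 ≤ y`, these factors come out of the roots,
and the two terms of the recurrence become `∓ √(a (p - a))` for even `n` and
`∓ √(a (p - a)) √(b (p + b)) / (a + b)` for odd `n`. -/

/-- Reduced matrix element `G1` for the `osp(3|2)` parastatistics Fock space of order `p`. -/
noncomputable def G1 (p : ℝ) (a b : ℕ) : ℝ :=
  if Even b then Real.sqrt ((a : ℝ) * ((a : ℝ) + b + 1) * (p - a) / ((a : ℝ) + b))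
  else -Real.sqrt ((a : ℝ) * (p - a))

/-- Reduced matrix element `G2` for the `osp(3|2)` parastatistics Fock space of order `p`. -/
noncomputable def G2 (p : ℝ) (a b : ℕ) : ℝ :=
  if Even b then Real.sqrt ((a : ℝ) + b + 1)
  else -Real.sqrt (((b : ℝ) + 1) * (p + b + 1) / ((a : ℝ) + b))

section Parity

variable (p : ℝ) (a : ℕ) {b : ℕ}

theorem G1_of_even (hb : Even b) :
    G1 p a b = √((a : ℝ) * ((a : ℝ) + b + 1) * (p - a) / ((a : ℝ) + b)) :=
  if_pos hb

theorem G1_of_odd (hb : Odd b) : G1 p a b = -√((a : ℝ) * (p - a)) :=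
  if_neg (Nat.not_even_iff_odd.mpr hb)

theorem G2_of_even (hb : Even b) : G2 p a b = √((a : ℝ) + b + 1) :=
  if_pos hb

theorem G2_of_odd (hb : Odd b) :
    G2 p a b = -√(((b : ℝ) + 1) * (p + b + 1) / ((a : ℝ) + b)) :=
  if_neg (Nat.not_even_iff_odd.mpr hb)

end Parity

section Recurrence

variable (p : ℝ) {a n : ℕ}

theorem G_recurrence_of_even (ha : 0 < a) (hn : Even n) :
    G1 p a (n + 1) * G2 p (a + 1) n / √((a : ℝ) + (n + 1) + 1)
      + G1 p a n * G2 p a n * √((a : ℝ) + (n + 1) - 1) / ((a : ℝ) + (n + 1)) = 0 := by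
  rw [G1_of_odd p a hn.add_one, G2_of_even p (a + 1) hn, G1_of_even p a hn, G2_of_even p a hn]
  push_cast
  have hs : (0 : ℝ) < a + n := by positivity
  rw [show (a : ℝ) * (a + n + 1) * (p - a) / (a + n) = a * (p - a) * ((a + n + 1) / (a + n)) by
        field_simp,
    show (a : ℝ) + 1 + n + 1 = a + (n + 1) + 1 by ring, show (a : ℝ) + (n + 1) - 1 = a + n by ring,
    Real.sqrt_mul' ((a : ℝ) * (p - a)) (by positivity), Real.sqrt_div' _ hs.le]
  field_simp
  rw [Real.sq_sqrt (by positivity)]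
  ring

theorem G_recurrence_of_odd (hn : Odd n) :
    G1 p a (n + 1) * G2 p (a + 1) n / √((a : ℝ) + (n + 1) + 1)
      + G1 p a n * G2 p a n * √((a : ℝ) + (n + 1) - 1) / ((a : ℝ) + (n + 1)) = 0 := by
  rw [G1_of_even p a hn.add_one, G2_of_odd p (a + 1) hn, G1_of_odd p a hn, G2_of_odd p a hn]
  push_cast
  have hs : (0 : ℝ) < a + n := by have := hn.pos; positivity
  rw [show (a : ℝ) * (a + (n + 1) + 1) * (p - a) / (a + (n + 1))
        = a * (p - a) * (a + n + 2) / (a + n + 1) by ring,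
    show ((n : ℝ) + 1) * (p + n + 1) / (a + 1 + n) = (n + 1) * (p + n + 1) / (a + n + 1) by ring,
    show (a : ℝ) + (n + 1) + 1 = a + n + 2 by ring, show (a : ℝ) + (n + 1) - 1 = a + n by ring,
    Real.sqrt_div' _ (by positivity), Real.sqrt_mul' ((a : ℝ) * (p - a)) (by positivity),
    Real.sqrt_div' _ (by positivity), Real.sqrt_div' _ hs.le]
  field_simp
  rw [Real.sq_sqrt (by positivity)]
  ring

end Recurrence

theorem stmt0 (p : ℝ) : ∀ a b : ℕ, 0 < a → 0 < b → (a : ℝ) ≤ p →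
    G1 p a b * G2 p (a + 1) (b - 1) / Real.sqrt ((a : ℝ) + b + 1)
      + G1 p a (b - 1) * G2 p a (b - 1) * Real.sqrt ((a : ℝ) + b - 1) / ((a : ℝ) + b) = 0 := by
  intro a b ha hb _
  obtain ⟨n, rfl⟩ := Nat.exists_eq_add_one_of_ne_zero hb.ne'
  rw [Nat.add_sub_cancel]
  push_cast
  rcases Nat.even_or_odd n with hn | hn
  · exact G_recurrence_of_even p ha hn
  · exact G_recurrence_of_odd p hn
end

section
/- Let p be a real number with p ≥ a+1 and define G1, G2 as the piecewise functions: G1(a,b) = sqrt(a(a+b+1)(p-a)/(a+b)) for b even, G1(a,b) = -sqrt(a(p-a)) for b odd, G2(a,b) = sqrt(a+b+1) for b even, G2(a,b) = -sqrt((b+1)(p+b+1)/(a+b)) for b odd. Then for all positive integers a, b: G1(a,b)²/(a+b+1) + ((a+b-1)/(a+b))·G2(a,b-1)² + ((a+b)/(a+b+1))·G2(a,b)² = p + 2b. -/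
section Squares

variable {p : ℝ} {a b : ℕ}

lemma G1_sq_of_even (hb : Even b) (hp : (a : ℝ) ≤ p) :
    G1 p a b ^ 2 = (a : ℝ) * ((a : ℝ) + b + 1) * (p - a) / ((a : ℝ) + b) := by
  rw [G1, if_pos hb, Real.sq_sqrt (by have := sub_nonneg.2 hp; positivity)]

lemma G1_sq_of_odd (hb : Odd b) (hp : (a : ℝ) ≤ p) :
    G1 p a b ^ 2 = (a : ℝ) * (p - a) := by
  rw [G1, if_neg (Nat.not_even_iff_odd.2 hb), neg_sq,
    Real.sq_sqrt (by have := sub_nonneg.2 hp; positivity)]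

lemma G2_sq_of_even (hb : Even b) : G2 p a b ^ 2 = (a : ℝ) + b + 1 := by
  rw [G2, if_pos hb, Real.sq_sqrt (by positivity)]

lemma G2_sq_of_odd (hb : Odd b) (hp : 0 ≤ p + b + 1) :
    G2 p a b ^ 2 = ((b : ℝ) + 1) * (p + b + 1) / ((a : ℝ) + b) := by
  rw [G2, if_neg (Nat.not_even_iff_odd.2 hb), neg_sq, Real.sq_sqrt (by positivity)]

end Squares

theorem stmt1 (p : ℝ) : ∀ a b : ℕ, 0 < a → 0 < b → (a : ℝ) + 1 ≤ p →
    G1 p a b ^ 2 / ((a : ℝ) + b + 1)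
      + (((a : ℝ) + b - 1) / ((a : ℝ) + b)) * G2 p a (b - 1) ^ 2
      + (((a : ℝ) + b) / ((a : ℝ) + b + 1)) * G2 p a b ^ 2 = p + 2 * b := by
  intro a b ha hb hp
  obtain ⟨k, rfl⟩ : ∃ k, b = k + 1 := ⟨b - 1, (Nat.succ_pred_eq_of_pos hb).symm⟩
  have hap : (a : ℝ) ≤ p := by linarith
  have hpk : 0 ≤ p + k + 1 := by linarith [k.cast_nonneg (α := ℝ)]
  rw [Nat.add_sub_cancel]
  rcases Nat.even_or_odd k with hk | hk
  · rw [G1_sq_of_odd hk.add_one hap, G2_sq_of_even hk,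
      G2_sq_of_odd hk.add_one (by push_cast; linarith)]
    push_cast
    field_simp
    ring
  · rw [G1_sq_of_even hk.add_one hap, G2_sq_of_odd hk hpk, G2_sq_of_even hk.add_one]
    have hak : (0 : ℝ) < a + k := by positivity
    push_cast
    field_simp
    ring
end

section
/- Define ν(k, 2l, 0) = k!·(p-k+1)_k·2^{2l}·l!·(p/2)_l where (a)_k denotes the Pochhammer symbol. If p is a positive integer, then ν(k, 2l, 0) ≥ 0 for all nonnegative integers k, l, and ν(k, 2l, 0) = 0 if and only if k > p. -/
/-- The squared norm `⟨k,2l,0|k,2l,0⟩ = k!·(p-k+1)_k·2^{2l}·l!·(p/2)_l` in the induced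
`osp(3|2)` module, where `(a)_j` is the Pochhammer symbol (rising factorial). -/
noncomputable def nu (p : ℝ) (k l : ℕ) : ℝ :=
  (k.factorial : ℝ) * (ascPochhammer ℝ k).eval (p - k + 1) * 2 ^ (2 * l)
    * (l.factorial : ℝ) * (ascPochhammer ℝ l).eval (p / 2)

/-- For `n < k` the product `(n - k + 1)(n - k + 2)⋯n` contains the factor `0`. -/
theorem ascPochhammer_eval_natCast_sub_add_one_of_lt {R : Type*} [Ring R] {n k : ℕ}
    (h : n < k) : (ascPochhammer R k).eval ((n : R) - k + 1) = 0 := by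
  have hroot : (n : R) - k + 1 = -((k - n - 1 : ℕ) : R) := by
    rw [Nat.cast_sub (by omega), Nat.cast_sub h.le, Nat.cast_one]
    abel
  rw [hroot]
  exact ascPochhammer_eval_neg_coe_nat_of_lt (by omega)

theorem nu_pos {p : ℝ} (hp : 0 < p) {k : ℕ} (hk : (k : ℝ) < p + 1) (l : ℕ) :
    0 < nu p k l := by
  have hk_poch : 0 < (ascPochhammer ℝ k).eval (p - k + 1) := ascPochhammer_pos _ _ (by linarith)
  have hl_poch : 0 < (ascPochhammer ℝ l).eval (p / 2) := ascPochhammer_pos _ _ (by positivity)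
  unfold nu
  positivity

theorem nu_natCast_of_lt {p k : ℕ} (h : p < k) (l : ℕ) : nu p k l = 0 := by
  simp only [nu, ascPochhammer_eval_natCast_sub_add_one_of_lt h, mul_zero, zero_mul]

theorem stmt4 (p : ℕ) (hp : 0 < p) :
    ∀ k l : ℕ, 0 ≤ nu (p : ℝ) k l ∧ (nu (p : ℝ) k l = 0 ↔ p < k) := by
  intro k l
  rcases le_or_gt k p with hk | hk
  · have hpos : 0 < nu p k l := nu_pos (by exact_mod_cast hp) (by norm_cast; omega) l
    exact ⟨hpos.le, iff_of_false hpos.ne' hk.not_gt⟩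
  · have hzero : nu p k l = 0 := nu_natCast_of_lt hk l
    exact ⟨hzero.ge, iff_of_true hzero hk⟩
end

section
/- Let A be an associative algebra with elements c₁, c₂ (odd/even grading: deg(c₁)=0, deg(c₂)=1) acting on a module generated by a vector |0⟩ with c₁⁻|0⟩ = c₂⁻|0⟩ = 0, [c₁⁻,c₁⁺]|0⟩ = p|0⟩, {c₂⁻,c₂⁺}|0⟩ = p|0⟩, and satisfying the parastatistics triple relations. Then the vectors |k,l,θ⟩ = (c₁⁺)^k(c₂⁺)^l([c₁⁺,c₂⁺])^θ|0⟩ satisfy ⟨1,1,0|1,1,0⟩ = p², ⟨1,1,0|0,0,1⟩ = 2p, and ⟨0,0,1|0,0,1⟩ = 4p, where the inner product is determined by ⟨0|0⟩ = 1 and (cⱼ^±)† = cⱼ^∓. -/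
/-!
Vacuum expectations are computed by moving each annihilator `c_j⁻` to the right, where it kills
`|0⟩`: one uses `c_j⁻ c_k⁺ = ⟦c_j⁻, c_k⁺⟧ ± c_k⁺ c_j⁻` and
`⟦c_j⁻, c_k⁺⟧ c_l⁺ = ⟦⟦c_j⁻, c_k⁺⟧, c_l⁺⟧ ± c_l⁺ ⟦c_j⁻, c_k⁺⟧`. The triple relations turn the double
bracket into `-2 δ_{jl} (-1)^{kl} c_k⁺`, and the vacuum conditions evaluate every remaining term.
This yields a closed formula for `⟨0| c_i⁻ c_j⁻ c_k⁺ c_l⁺ |0⟩`, and the three inner products are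
linear combinations of four instances of it.
-/

/-- Graded bracket `⟦x,y⟧ = xy - (-1)^d yx`, where `d` is the product of the degrees. -/
def sb {A : Type*} [Ring A] (d : ℕ) (x y : A) : A := x * y - (-1 : A) ^ d * y * x

theorem mul_eq_sb_add {A : Type*} [Ring A] (d : ℕ) (x y : A) :
    x * y = sb d x y + (-1 : A) ^ d * y * x := by
  rw [sb, sub_add_cancel]

theorem map_mul_neg_one_pow_mul {A : Type*} [Ring A] [Algebra ℝ A] (φ : A →ₗ[ℝ] ℝ)
    (d : ℕ) (X Y : A) : φ (X * ((-1 : A) ^ d * Y)) = (-1) ^ d * φ (X * Y) := by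
  have h : (-1 : A) ^ d = algebraMap ℝ A ((-1) ^ d) := by simp
  rw [h, Algebra.left_comm, ← Algebra.smul_def, map_smul, smul_eq_mul]

/-- The relations (2.10) for one parafermion `c 0` and one paraboson `c 1`. -/
def ParastatisticsTripleRelations {A : Type*} [Ring A] (c : Fin 2 → ℤ → A) : Prop :=
  ∀ (j k l : Fin 2) (ξ η ε : ℤ),
    (ξ = 1 ∨ ξ = -1) → (η = 1 ∨ η = -1) → (ε = 1 ∨ ε = -1) →
    sb ((j.val + k.val) * l.val) (sb (j.val * k.val) (c j ξ) (c k η)) (c l ε)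
      = (-2 : A) * (if j = l ∧ ε = -ξ then 1 else 0) * (ε : A) ^ l.val
          * (-1 : A) ^ (k.val * l.val) * c k η
        + (2 : A) * (ε : A) ^ l.val * (if k = l ∧ ε = -η then 1 else 0) * c j ξ

theorem sb_sb_annihilator_creator_creator {A : Type*} [Ring A] [Algebra ℝ A] {c : Fin 2 → ℤ → A}
    (hrel : ParastatisticsTripleRelations c) (j k l : Fin 2) :
    sb ((j.val + k.val) * l.val) (sb (j.val * k.val) (c j (-1)) (c k 1)) (c l 1)
      = (if j = l then -2 * (-1 : ℝ) ^ (k.val * l.val) else 0) • c k 1 := by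
  rw [hrel j k l (-1) 1 1 (Or.inr rfl) (Or.inl rfl) (Or.inl rfl)]
  simp only [neg_neg, and_true, show (1 : ℤ) ≠ -1 by decide, and_false, if_false,
    Int.cast_one, one_pow, mul_one, mul_zero, zero_mul, add_zero]
  split_ifs <;> simp [Algebra.smul_def, map_ofNat]

section Vacuum

variable {A : Type*} [Ring A] [Algebra ℝ A] {p : ℝ} {c : Fin 2 → ℤ → A} {φ : A →ₗ[ℝ] ℝ}

theorem vev_mul_annihilator_mul_creator
    (hvac : ∀ (X : A) (j : Fin 2), φ (X * c j (-1)) = 0)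
    (hnum : ∀ (X : A) (j k : Fin 2),
      φ (X * sb (j.val * k.val) (c j (-1)) (c k 1)) = (if j = k then p else 0) * φ X)
    (X : A) (j k : Fin 2) :
    φ (X * (c j (-1) * c k 1)) = (if j = k then p else 0) * φ X := by
  rw [mul_eq_sb_add (j.val * k.val) (c j (-1)), mul_add, map_add, hnum, mul_assoc,
    map_mul_neg_one_pow_mul, ← mul_assoc, hvac, mul_zero, add_zero]

theorem vev_annihilator_mul_creator (hone : φ 1 = 1)
    (hvac : ∀ (X : A) (j : Fin 2), φ (X * c j (-1)) = 0)
    (hnum : ∀ (X : A) (j k : Fin 2),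
      φ (X * sb (j.val * k.val) (c j (-1)) (c k 1)) = (if j = k then p else 0) * φ X)
    (j k : Fin 2) : φ (c j (-1) * c k 1) = if j = k then p else 0 := by
  simpa [hone] using vev_mul_annihilator_mul_creator hvac hnum 1 j k

theorem vev_two_annihilators_two_creators (hone : φ 1 = 1)
    (hvac : ∀ (X : A) (j : Fin 2), φ (X * c j (-1)) = 0)
    (hnum : ∀ (X : A) (j k : Fin 2),
      φ (X * sb (j.val * k.val) (c j (-1)) (c k 1)) = (if j = k then p else 0) * φ X)
    (hrel : ParastatisticsTripleRelations c)
    (i j k l : Fin 2) :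
    φ (c i (-1) * c j (-1) * (c k 1 * c l 1))
      = (if j = k ∧ i = l then p ^ 2 else 0)
        + (if j = l ∧ i = k then (-1) ^ (j.val * k.val) * (p ^ 2 - 2 * p) else 0) := by
  set S := sb (j.val * k.val) (c j (-1)) (c k 1)
  have expand : c i (-1) * c j (-1) * (c k 1 * c l 1)
      = c i (-1) * sb ((j.val + k.val) * l.val) S (c l 1)
        + c i (-1) * ((-1) ^ ((j.val + k.val) * l.val) * (c l 1 * S))
        + c i (-1) * ((-1) ^ (j.val * k.val) * (c k 1 * (c j (-1) * c l 1))) := by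
    rw [mul_assoc, ← mul_assoc (c j _), mul_eq_sb_add (j.val * k.val) (c j _),
      add_mul, mul_eq_sb_add ((j.val + k.val) * l.val) S]
    simp only [mul_add, add_mul, mul_assoc]
  rw [expand, map_add, map_add, map_mul_neg_one_pow_mul, map_mul_neg_one_pow_mul,
    sb_sb_annihilator_creator_creator hrel, mul_smul_comm, map_smul, smul_eq_mul,
    ← mul_assoc (c i _) (c l 1), hnum, ← mul_assoc (c i _) (c k 1),
    vev_mul_annihilator_mul_creator hvac hnum]
  simp only [vev_annihilator_mul_creator hone hvac hnum]
  fin_cases i <;> fin_cases j <;> fin_cases k <;> fin_cases l <;> simp <;> ring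

end Vacuum

/-- `c j ξ` is `c_{j+1}^ξ` and `φ X = ⟨0| X |0⟩`, so the bra of `X |0⟩` is `⟨0| X†`. -/
theorem stmt15 {A : Type*} [Ring A] [Algebra ℝ A] (p : ℝ) (c : Fin 2 → ℤ → A)
    (φ : A →ₗ[ℝ] ℝ)
    (hone : φ 1 = 1)
    (hvac : ∀ (X : A) (j : Fin 2), φ (X * c j (-1)) = 0)
    (hnum : ∀ (X : A) (j k : Fin 2),
      φ (X * sb (j.val * k.val) (c j (-1)) (c k 1)) = (if j = k then p else 0) * φ X)
    (hrel : ∀ (j k l : Fin 2) (ξ η ε : ℤ),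
      (ξ = 1 ∨ ξ = -1) → (η = 1 ∨ η = -1) → (ε = 1 ∨ ε = -1) →
      sb ((j.val + k.val) * l.val) (sb (j.val * k.val) (c j ξ) (c k η)) (c l ε)
        = (-2 : A) * (if j = l ∧ ε = -ξ then 1 else 0) * (ε : A) ^ l.val
            * (-1 : A) ^ (k.val * l.val) * c k η
          + (2 : A) * (ε : A) ^ l.val * (if k = l ∧ ε = -η then 1 else 0) * c j ξ) :
    φ (c 1 (-1) * c 0 (-1) * (c 0 1 * c 1 1)) = p ^ 2 ∧
    φ (c 1 (-1) * c 0 (-1) * (c 0 1 * c 1 1 - c 1 1 * c 0 1)) = 2 * p ∧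
    φ ((c 1 (-1) * c 0 (-1) - c 0 (-1) * c 1 (-1)) * (c 0 1 * c 1 1 - c 1 1 * c 0 1))
      = 4 * p := by
  have vev := vev_two_annihilators_two_creators hone hvac hnum hrel
  refine ⟨by simpa using vev 1 0 0 1, ?_, ?_⟩
  · rw [mul_sub, map_sub, vev, vev]
    norm_num
  · rw [sub_mul, mul_sub, mul_sub, map_sub, map_sub, map_sub, vev, vev, vev, vev]
    norm_num
    ring
end
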